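/- arXiv:0908.1528 — 3 statements merged into one kernel-verified Lean document; each statement's English description precedes it below -/
import Mathlib

section
/- Let P and Q be consistent connections with S1(P) = S1(Q) and S2(P) = S2(Q). If for every consistent connection R having Q as a subconnection, replacing Q by P yields a consistent connection R' with dep(R) ≤ dep(R') ≤ arr(R') ≤ arr(R), then P dominates Q. -/
/-- A timetable: stations, stop events, minimum transfer times, and for each stop
event the (daily, hence time-independent) residence times: between the previous
arrival and the departure of the stop event (`resD`, `none` if the train begins
there) and between the arrival and the next departure (`resA`, `none` if the
train ends there). -/
structure Timetable where
  Station : Type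
  StopEvent : Type
  /-- minimum transfer time at a station -/
  transfer : Station → ℕ
  /-- residence time between previous arrival and departure of a stop event -/
  resD : StopEvent → Option ℕ
  /-- residence time between arrival and next departure of a stop event -/
  resA : StopEvent → Option ℕ

/-- `cycleDiff t t'` is the smallest nonnegative `ℓ` with `ℓ ≡ t' - t (mod 1440)`. -/
def cycleDiff (t t' : ℕ) : ℕ := (t' + 1440 - t) % 1440

/-- An elementary connection `c = (Z1, Z2, S1, S2, t_d, t_a)`. -/
structure EC (T : Timetable) where
  Z1 : T.StopEvent
  Z2 : T.StopEvent
  St1 : T.Station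
  St2 : T.Station
  td : ℕ
  ta : ℕ
  htd : td ≤ 1439
  hta : ta ≤ 1439

/-- The length of an elementary connection. -/
def EC.len {T : Timetable} (c : EC T) : ℕ := cycleDiff c.td c.ta

/-- A leg of a connection: an elementary connection together with its actual
departure and arrival times (minutes from the first day). -/
structure Leg (T : Timetable) where
  c : EC T
  dep : ℤ
  arr : ℤ

/-- A connection: a nonempty sequence of legs. -/
structure Conn (T : Timetable) where
  legs : List (Leg T)
  ne : legs ≠ []

namespace Conn

variable {T : Timetable}

/-- departure time `dep(P) = dep_1(P)` -/
def dep (P : Conn T) : ℤ := (P.legs.head P.ne).dep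
/-- arrival time `arr(P) = arr_k(P)` -/
def arr (P : Conn T) : ℤ := (P.legs.getLast P.ne).arr
/-- departure station -/
def S1 (P : Conn T) : T.Station := (P.legs.head P.ne).c.St1
/-- arrival station -/
def S2 (P : Conn T) : T.Station := (P.legs.getLast P.ne).c.St2
/-- departure stop event -/
def Z1 (P : Conn T) : T.StopEvent := (P.legs.head P.ne).c.Z1
/-- arrival stop event -/
def Z2 (P : Conn T) : T.StopEvent := (P.legs.getLast P.ne).c.Z2

/-- Shift all times of a connection by `t` minutes (e.g. the daily copy of a
daily operating connection, `t = a * 1440`). -/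
def shift (P : Conn T) (t : ℤ) : Conn T :=
  ⟨P.legs.map (fun l => ⟨l.c, l.dep + t, l.arr + t⟩), by
    have := P.ne; simp_all⟩

/-- Concatenation of two connections (the second appended after the first,
keeping all given times). -/
def concat (P Q : Conn T) : Conn T :=
  ⟨P.legs ++ Q.legs, by have := P.ne; simp_all⟩

end Conn

/-- Conditions on a single leg of a consistent connection: the departure time is
nonnegative, agrees with the timetabled departure time modulo 1440, and the
arrival time is the departure time plus the length. -/
def LegOK {T : Timetable} (l : Leg T) : Prop :=
  0 ≤ l.dep ∧ l.dep % 1440 = (l.c.td : ℤ) ∧ l.arr = l.dep + (l.c.len : ℤ)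

/-- Conditions on two consecutive legs of a consistent connection: stations
match, and waiting respects the minimum transfer time unless it is the same
train (same stop event). -/
def AdjOK (T : Timetable) (l l' : Leg T) : Prop :=
  l.c.St2 = l'.c.St1 ∧
  (l'.c.Z1 = l.c.Z2 → l.arr ≤ l'.dep) ∧
  (l'.c.Z1 ≠ l.c.Z2 → l.arr + (T.transfer l.c.St2 : ℤ) ≤ l'.dep)

/-- A connection is consistent. -/
def Consistent (T : Timetable) (P : Conn T) : Prop :=
  (∀ l ∈ P.legs, LegOK l) ∧ P.legs.Chain' (AdjOK T)

/-- `parr(P)`: previous arrival time of the stop event `Z1(P)`, or `none` if the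
train begins there. -/
def parr (T : Timetable) (P : Conn T) : Option ℤ :=
  (T.resD P.Z1).map (fun r => P.dep - (r : ℤ))

/-- `ndep(P)`: next departure time of the stop event `Z2(P)`, or `none` if the
train ends there. -/
def ndep (T : Timetable) (P : Conn T) : Option ℤ :=
  (T.resA P.Z2).map (fun r => P.arr + (r : ℤ))

/-- `P` is a critical departure: `parr(P) ≠ ⊥` and
`dep(P) - parr(P) < transfer(S1(P))`. -/
def CriticalDep (T : Timetable) (P : Conn T) : Prop :=
  ∃ t, parr T P = some t ∧ P.dep - t < (T.transfer P.S1 : ℤ)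

/-- `P` is a critical arrival: `ndep(P) ≠ ⊥` and
`ndep(P) - arr(P) < transfer(S2(P))`. -/
def CriticalArr (T : Timetable) (P : Conn T) : Prop :=
  ∃ t, ndep T P = some t ∧ t - P.arr < (T.transfer P.S2 : ℤ)

/-- Domination between connections. -/
def Dominates (T : Timetable) (P Q : Conn T) : Prop :=
  (P.S1 = Q.S1 ∧ P.S2 = Q.S2) ∧
  (Q.dep ≤ P.dep ∧ P.arr ≤ Q.arr) ∧
  (Q.Z1 = P.Z1 ∨ ¬ CriticalDep T Q ∨
    ∀ t, parr T Q = some t → (T.transfer P.S1 : ℤ) ≤ P.dep - t) ∧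
  (Q.Z2 = P.Z2 ∨ ¬ CriticalArr T Q ∨
    ∀ t, ndep T Q = some t → (T.transfer P.S2 : ℤ) ≤ t - P.arr)

/-- Domination between arrival connections. -/
def ADominates (T : Timetable) (P Q : Conn T) : Prop :=
  P.S2 = Q.S2 ∧ P.arr ≤ Q.arr ∧
  (Q.Z2 = P.Z2 ∨ ¬ CriticalArr T Q ∨
    ∀ t, ndep T Q = some t → (T.transfer P.S2 : ℤ) ≤ t - P.arr)

/-- A consistent arrival connection w.r.t. a time query with departure station
`A` and departure time `t0`: a consistent connection departing from `A` not
before `t0`. -/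
def IsArrConn (T : Timetable) (A : T.Station) (t0 : ℤ) (P : Conn T) : Prop :=
  Consistent T P ∧ P.S1 = A ∧ t0 ≤ P.dep

/-- The connection obtained from a connection `R = pre ++ Q ++ suf` (with `Q` a
subconnection) by replacing `Q` by `P`. -/
def replaced (T : Timetable) (pre suf : List (Leg T)) (P : Conn T) : Conn T :=
  ⟨pre ++ P.legs ++ suf, by have := P.ne; simp_all⟩

/-! The hypothesis quantifies over all consistent `R ⊇ Q`, so each domination condition is forced
by a well-chosen `R`: `R = Q` gives the time bounds, and a zero-length leg waiting at the start
(resp. end) of `Q` on the train of `Q` becomes, after `Q` is replaced by a connection boarding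
(resp. leaving) a different train, a transfer that must respect the minimum transfer time. -/

section Replacement

variable {T : Timetable}

def Leg.wait (z : T.StopEvent) (s : T.Station) (a : ℤ) : Leg T :=
  ⟨⟨z, z, s, s, (a % 1440).toNat, (a % 1440).toNat,
    by have := Int.emod_lt_of_pos a (by norm_num : (0 : ℤ) < 1440); omega,
    by have := Int.emod_lt_of_pos a (by norm_num : (0 : ℤ) < 1440); omega⟩, a, a⟩

theorem legOK_wait (z : T.StopEvent) (s : T.Station) {a : ℤ} (ha : 0 ≤ a) :
    LegOK (Leg.wait z s a) := by
  refine ⟨ha, (Int.toNat_of_nonneg (Int.emod_nonneg a (by norm_num))).symm, ?_⟩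
  simp [Leg.wait, EC.len, cycleDiff]

theorem adjOK_wait_head {P : Conn T} {a : ℤ} (ha : a ≤ P.dep) :
    AdjOK T (Leg.wait P.Z1 P.S1 a) (P.legs.head P.ne) :=
  ⟨rfl, fun _ => ha, fun h => absurd rfl h⟩

theorem adjOK_getLast_wait {P : Conn T} {a : ℤ} (ha : P.arr ≤ a) :
    AdjOK T (P.legs.getLast P.ne) (Leg.wait P.Z2 P.S2 a) :=
  ⟨rfl, fun _ => ha, fun h => absurd rfl h⟩

@[simp]
theorem replaced_nil_nil (P : Conn T) : replaced T [] [] P = P := by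
  cases P; simp [replaced]

theorem consistent_iff {P : Conn T} :
    Consistent T P ↔ (∀ l ∈ P.legs, LegOK l) ∧ P.legs.IsChain (AdjOK T) :=
  Iff.rfl

theorem consistent_replaced_singleton_nil_iff {l : Leg T} {P : Conn T} :
    Consistent T (replaced T [l] [] P) ↔
      LegOK l ∧ AdjOK T l (P.legs.head P.ne) ∧ Consistent T P := by
  obtain ⟨_ | ⟨p, ps⟩, hne⟩ := P
  · contradiction
  simp only [consistent_iff, replaced, List.singleton_append, List.append_nil, List.mem_cons,
    forall_eq_or_imp, List.isChain_cons_cons, List.head_cons]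
  tauto

theorem consistent_replaced_nil_singleton_iff {l : Leg T} {P : Conn T} :
    Consistent T (replaced T [] [l] P) ↔
      Consistent T P ∧ LegOK l ∧ AdjOK T (P.legs.getLast P.ne) l := by
  simp only [consistent_iff, replaced, List.nil_append, List.mem_append, List.mem_singleton,
    List.isChain_append, List.isChain_singleton, List.getLast?_eq_some_getLast P.ne,
    List.head?_cons, Option.mem_some_iff, forall_eq, forall_eq', or_imp, forall_and, true_and]
  tauto

theorem parr_eq_some_iff {P : Conn T} {t : ℤ} :
    parr T P = some t ↔ ∃ r : ℕ, T.resD P.Z1 = some r ∧ t = P.dep - r := by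
  rcases h : T.resD P.Z1 with _ | r <;> simp [parr, h, eq_comm]

theorem ndep_eq_some_iff {P : Conn T} {t : ℤ} :
    ndep T P = some t ↔ ∃ r : ℕ, T.resA P.Z2 = some r ∧ t = P.arr + r := by
  rcases h : T.resA P.Z2 with _ | r <;> simp [ndep, h, eq_comm]

theorem Consistent.dep_nonneg {P : Conn T} (hP : Consistent T P) : 0 ≤ P.dep :=
  (hP.1 _ (List.head_mem P.ne)).1

theorem Consistent.arr_nonneg {P : Conn T} (hP : Consistent T P) : 0 ≤ P.arr := by
  obtain ⟨hdep, -, harr⟩ := hP.1 _ (List.getLast_mem P.ne)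
  simp only [Conn.arr, harr]
  omega

theorem transfer_le_dep_sub_parr {P Q : Conn T} (hQ : Consistent T Q) (hS1 : P.S1 = Q.S1)
    (hZ1 : Q.Z1 ≠ P.Z1)
    (hrep : ∀ l, Consistent T (replaced T [l] [] Q) → Consistent T (replaced T [l] [] P))
    {t : ℤ} (ht : parr T Q = some t) : (T.transfer P.S1 : ℤ) ≤ P.dep - t := by
  obtain ⟨r, -, rfl⟩ := parr_eq_some_iff.1 ht
  -- `parr` may lie before time `0`, where no leg can depart.
  set a := max (Q.dep - r) 0 with ha
  have hQwait : Consistent T (replaced T [Leg.wait Q.Z1 Q.S1 a] [] Q) :=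
    consistent_replaced_singleton_nil_iff.2 ⟨legOK_wait _ _ (le_max_right _ _),
      adjOK_wait_head (max_le (by omega) hQ.dep_nonneg), hQ⟩
  have htransfer : a + T.transfer Q.S1 ≤ P.dep :=
    (consistent_replaced_singleton_nil_iff.1 (hrep _ hQwait)).2.1.2.2 (Ne.symm hZ1)
  rw [hS1]
  omega

theorem transfer_le_ndep_sub_arr {P Q : Conn T} (hQ : Consistent T Q)
    (hZ2 : Q.Z2 ≠ P.Z2)
    (hrep : ∀ l, Consistent T (replaced T [] [l] Q) → Consistent T (replaced T [] [l] P))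
    {t : ℤ} (ht : ndep T Q = some t) : (T.transfer P.S2 : ℤ) ≤ t - P.arr := by
  obtain ⟨r, -, rfl⟩ := ndep_eq_some_iff.1 ht
  have hQwait : Consistent T (replaced T [] [Leg.wait Q.Z2 Q.S2 (Q.arr + r)] Q) :=
    consistent_replaced_nil_singleton_iff.2 ⟨hQ, legOK_wait _ _ (by linarith [hQ.arr_nonneg]),
      adjOK_getLast_wait (by omega)⟩
  have htransfer : P.arr + T.transfer P.S2 ≤ Q.arr + r :=
    (consistent_replaced_nil_singleton_iff.1 (hrep _ hQwait)).2.2.2.2 hZ2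
  omega

end Replacement

theorem replaceable_dominates_general (T : Timetable) (P Q : Conn T)
    (hQ : Consistent T Q)
    (hS1 : P.S1 = Q.S1) (hS2 : P.S2 = Q.S2)
    (hrep : ∀ pre suf : List (Leg T),
      Consistent T (replaced T pre suf Q) →
        Consistent T (replaced T pre suf P) ∧
        (replaced T pre suf Q).dep ≤ (replaced T pre suf P).dep ∧
        (replaced T pre suf P).dep ≤ (replaced T pre suf P).arr ∧
        (replaced T pre suf P).arr ≤ (replaced T pre suf Q).arr) :
    Dominates T P Q := by
  obtain ⟨-, hdep, -, harr⟩ := hrep [] [] (by simpa using hQ)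
  simp only [replaced_nil_nil] at hdep harr
  refine ⟨⟨hS1, hS2⟩, ⟨hdep, harr⟩, ?_, ?_⟩
  · by_cases hZ1 : Q.Z1 = P.Z1
    · exact .inl hZ1
    · exact .inr <| .inr fun t ht =>
        transfer_le_dep_sub_parr hQ hS1 hZ1 (fun l h => (hrep [l] [] h).1) ht
  · by_cases hZ2 : Q.Z2 = P.Z2
    · exact .inl hZ2
    · exact .inr <| .inr fun t ht =>
        transfer_le_ndep_sub_arr hQ hZ2 (fun l h => (hrep [] [l] h).1) ht

/-- Let `P` and `Q` be consistent connections between the same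
stations. If for every consistent connection `R` having `Q` as a subconnection,
replacing `Q` by `P` yields a consistent connection `R'` with
`dep(R) ≤ dep(R') ≤ arr(R') ≤ arr(R)`, then `P` dominates `Q`. -/
theorem replaceable_dominates (T : Timetable) (P Q : Conn T)
    (hP : Consistent T P) (hQ : Consistent T Q)
    (hS1 : P.S1 = Q.S1) (hS2 : P.S2 = Q.S2)
    (hrep : ∀ pre suf : List (Leg T),
      Consistent T (replaced T pre suf Q) →
        Consistent T (replaced T pre suf P) ∧
        (replaced T pre suf Q).dep ≤ (replaced T pre suf P).dep ∧
        (replaced T pre suf P).dep ≤ (replaced T pre suf P).arr ∧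
        (replaced T pre suf P).arr ≤ (replaced T pre suf Q).arr) :
    Dominates T P Q :=
  replaceable_dominates_general T P Q hQ hS1 hS2 hrep
end

section
/- The domination relation on consistent connections is transitive: if a consistent connection P dominates a consistent connection Q, and Q dominates a consistent connection R, then P dominates R. -/
/-- The domination relation on consistent connections is
transitive. -/
theorem dominates_trans (T : Timetable) (P Q R : Conn T)
    (hP : Consistent T P) (hQ : Consistent T Q) (hR : Consistent T R)
    (hPQ : Dominates T P Q) (hQR : Dominates T Q R) :
    Dominates T P R := by
  obtain ⟨⟨hS1PQ, hS2PQ⟩, ⟨hdQP, haPQ⟩, h3PQ, h4PQ⟩ := hPQ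
  obtain ⟨⟨hS1QR, hS2QR⟩, ⟨hdRQ, haQR⟩, h3QR, h4QR⟩ := hQR
  refine ⟨⟨hS1PQ.trans hS1QR, hS2PQ.trans hS2QR⟩,
    ⟨hdRQ.trans hdQP, haPQ.trans haQR⟩, ?_, ?_⟩
  · rcases h3QR with hz | hnc | hall
    · by_cases hcr : CriticalDep T R
      · obtain ⟨t, ht, hlt⟩ := hcr
        rcases hr : T.resD R.Z1 with _ | r
        · simp [parr, hr] at ht
        have hval : parr T R = some (R.dep - r) := by simp [parr, hr]
        rw [hval] at ht
        have hrt : R.dep - (r:ℤ) = t := by injection ht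
        have hrQ : T.resD Q.Z1 = some r := hz ▸ hr
        have hcQ : CriticalDep T Q := by
          refine ⟨Q.dep - r, by simp [parr, hrQ], ?_⟩
          rw [hS1QR]
          omega
        rcases h3PQ with hz' | hnc' | hall'
        · exact Or.inl (hz.trans hz')
        · exact absurd hcQ hnc'
        · refine Or.inr (Or.inr fun t' ht' => ?_)
          have hval' : parr T R = some (R.dep - r) := by simp [parr, hr]
          rw [hval'] at ht'
          have ht'' : R.dep - (r:ℤ) = t' := by injection ht'
          have hle := hall' (Q.dep - r) (by simp [parr, hrQ])
          omega
      · exact Or.inr (Or.inl hcr)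
    · exact Or.inr (Or.inl hnc)
    · refine Or.inr (Or.inr fun t ht => ?_)
      have := hall t ht
      rw [hS1PQ]
      omega
  · rcases h4QR with hz | hnc | hall
    · by_cases hcr : CriticalArr T R
      · obtain ⟨t, ht, hlt⟩ := hcr
        rcases hr : T.resA R.Z2 with _ | r
        · simp [ndep, hr] at ht
        have hval : ndep T R = some (R.arr + r) := by simp [ndep, hr]
        rw [hval] at ht
        have hrt : R.arr + (r:ℤ) = t := by injection ht
        have hrQ : T.resA Q.Z2 = some r := hz ▸ hr
        have hcQ : CriticalArr T Q := by
          refine ⟨Q.arr + r, by simp [ndep, hrQ], ?_⟩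
          rw [hS2QR]
          omega
        rcases h4PQ with hz' | hnc' | hall'
        · exact Or.inl (hz.trans hz')
        · exact absurd hcQ hnc'
        · refine Or.inr (Or.inr fun t' ht' => ?_)
          have hval' : ndep T R = some (R.arr + r) := by simp [ndep, hr]
          rw [hval'] at ht'
          have ht'' : R.arr + (r:ℤ) = t' := by injection ht'
          have hle := hall' (Q.arr + r) (by simp [ndep, hrQ])
          omega
      · exact Or.inr (Or.inl hcr)
    · exact Or.inr (Or.inl hnc)
    · refine Or.inr (Or.inr fun t ht => ?_)
      have := hall t ht
      rw [hS2PQ]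
      omega
end

section
/- Let F be a finite nonempty set of consistent connections between two stations S1 and S2, all operating daily (so every element of F has a daily copy shifted by a·1440 minutes for each day a ≥ 0). Let P be a consistent arrival connection at station S1 and let Q be a daily copy of an element of F that P can link with via a transfer, i.e. dep(Q) − arr(P) ≥ transfer(S1). Let d be the difference between the length of Q and the minimum length of any connection in F. Then every daily copy Q' of an element of F with dep(Q') ≥ dep(Q) + d + transfer(S2) also satisfies dep(Q') − arr(P) ≥ transfer(S1), and the arrival connection obtained by linking P with Q dominates the arrival connection obtained by linking P with Q'. -/
section Aux

variable {T : Timetable}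

lemma Conn.shift_dep (P : Conn T) (t : ℤ) : (P.shift t).dep = P.dep + t := by
  simp [Conn.shift, Conn.dep, List.head_map]

lemma Conn.shift_arr (P : Conn T) (t : ℤ) : (P.shift t).arr = P.arr + t := by
  simp [Conn.shift, Conn.arr, List.getLast_map]

lemma Conn.shift_S2 (P : Conn T) (t : ℤ) : (P.shift t).S2 = P.S2 := by
  simp [Conn.shift, Conn.S2, List.getLast_map]

lemma Conn.shift_Z2 (P : Conn T) (t : ℤ) : (P.shift t).Z2 = P.Z2 := by
  simp [Conn.shift, Conn.Z2, List.getLast_map]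

lemma Conn.concat_arr (P Q : Conn T) : (P.concat Q).arr = Q.arr := by
  simp [Conn.concat, Conn.arr, List.getLast_append, List.isEmpty_iff, Q.ne]

lemma Conn.concat_S2 (P Q : Conn T) : (P.concat Q).S2 = Q.S2 := by
  simp [Conn.concat, Conn.S2, List.getLast_append, List.isEmpty_iff, Q.ne]

lemma Conn.concat_Z2 (P Q : Conn T) : (P.concat Q).Z2 = Q.Z2 := by
  simp [Conn.concat, Conn.Z2, List.getLast_append, List.isEmpty_iff, Q.ne]

end Aux

/-- the dominant-range lemma. `F` is a finite nonempty set of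
consistent connections between stations `X` and `Y` operating daily (their
daily copies are the shifts by `a * 1440`); `P` is a consistent arrival
connection at `X` (for the fixed query `(A,_,t0)`) that can link with a daily
copy `Q` of an element of `F` via a transfer. With `d` the difference between
the length of `Q` and the minimum length in `F`, every daily copy `Q'` with
`dep(Q') ≥ dep(Q) + d + transfer(Y)` can also be linked with `P` via a
transfer, and linking `P` with `Q` dominates linking `P` with `Q'`. -/
theorem dominant_range (T : Timetable) (A : T.Station) (t0 : ℤ)
    (X Y : T.Station) (F : Finset (Conn T)) (hne : F.Nonempty)
    (hF : ∀ C ∈ F, Consistent T C ∧ C.S1 = X ∧ C.S2 = Y)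
    (P : Conn T) (hP : IsArrConn T A t0 P) (hPX : P.S2 = X)
    (Q : Conn T) (hQ : ∃ C ∈ F, ∃ a : ℕ, Q = C.shift ((a : ℤ) * 1440))
    (hlink : (T.transfer X : ℤ) ≤ Q.dep - P.arr)
    (d : ℤ)
    (hd : d = (Q.arr - Q.dep) - F.inf' hne (fun C => C.arr - C.dep)) :
    ∀ Q' : Conn T, (∃ C ∈ F, ∃ a : ℕ, Q' = C.shift ((a : ℤ) * 1440)) →
      Q.dep + d + (T.transfer Y : ℤ) ≤ Q'.dep →
        (T.transfer X : ℤ) ≤ Q'.dep - P.arr ∧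
        ADominates T (P.concat Q) (P.concat Q') := by
  obtain ⟨C, hC, a, rfl⟩ := hQ
  rintro Q' ⟨C', hC', a', rfl⟩ hdep
  have hinfC : F.inf' hne (fun C => C.arr - C.dep) ≤ C.arr - C.dep :=
    Finset.inf'_le _ hC
  have hinfC' : F.inf' hne (fun C => C.arr - C.dep) ≤ C'.arr - C'.dep :=
    Finset.inf'_le _ hC'
  have htY : (0 : ℤ) ≤ (T.transfer Y : ℤ) := Int.natCast_nonneg _
  simp only [Conn.shift_dep, Conn.shift_arr] at *
  have harr : C.arr + (a : ℤ) * 1440 + (T.transfer Y : ℤ)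
      ≤ C'.arr + (a' : ℤ) * 1440 := by linarith
  refine ⟨by linarith, ?_, ?_, ?_⟩
  · rw [Conn.concat_S2, Conn.concat_S2, Conn.shift_S2, Conn.shift_S2,
      (hF C hC).2.2, (hF C' hC').2.2]
  · rw [Conn.concat_arr, Conn.concat_arr, Conn.shift_arr, Conn.shift_arr]
    linarith
  · right; right
    intro t ht
    rw [ndep, Option.map_eq_some_iff] at ht
    obtain ⟨r, hres, rfl⟩ := ht
    have hr : (0 : ℤ) ≤ (r : ℤ) := by
      cases h : T.resA (P.concat (C'.shift ((a' : ℤ) * 1440))).Z2 with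
      | none => rw [h] at hres; simp at hres
      | some n => rw [h] at hres; simp at hres; omega
    rw [Conn.concat_arr, Conn.concat_arr, Conn.shift_arr, Conn.shift_arr,
      Conn.concat_S2, Conn.shift_S2, (hF C hC).2.2]
    linarith
end
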